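/- (Splitting of bounded BMO functions with rational-square coefficients) Let x = Σ x_I h_I with ‖x‖_BMO ≤ 1 and suppose there exist K ∈ ℕ and integers k_I with x_I² = k_I/K for all dyadic I (so k_I ≤ K). Fix a dyadic interval J and an injection τ on dyadic intervals. Then there exist collections E_1, ..., E_K of dyadic intervals, each satisfying the 3-Carleson condition, with τ(E_i)* ⊆ J for each i, such that (1/K) Σ_{τ(I) ⊆ J} k_I |τ(I)| = (1/K) Σ_{i=1}^K Σ_{I ∈ E_i} |τ(I)|. -/

import Mathlib

open MeasureTheory

/-- A dyadic interval `[k/2^n, (k+1)/2^n)` of `[0,1)`. -/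
structure DI where
  n : ℕ
  k : ℕ
  hk : k < 2 ^ n

namespace DI

/-- The underlying set of a dyadic interval. -/
def carrier (I : DI) : Set ℝ := Set.Ico ((I.k : ℝ) / 2 ^ I.n) ((I.k + 1 : ℝ) / 2 ^ I.n)

/-- The length `|I| = 2^{-n}` of a dyadic interval. -/
noncomputable def len (I : DI) : ENNReal := ENNReal.ofReal ((2 : ℝ)⁻¹ ^ I.n)

end DI

/-- The Carleson sum `∑_{I ∈ L, I ⊆ J} |I|`. -/
noncomputable def carlesonSum (L : Set DI) (J : DI) : ENNReal :=
  ∑' I : {I : DI // I ∈ L ∧ I.carrier ⊆ J.carrier}, I.1.len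

/-- `L` satisfies the `M`-Carleson condition. -/
def CarlesonLE (L : Set DI) (M : ENNReal) : Prop :=
  ∀ J : DI, carlesonSum L J ≤ M * J.len

/-- The Carleson constant `⟦L⟧ = sup_J (1/|J|) ∑_{I ∈ L, I ⊆ J} |I|`. -/
noncomputable def carlesonConst (L : Set DI) : ENNReal :=
  ⨆ J : DI, carlesonSum L J / J.len

/-- The square of the dyadic BMO norm of `x = ∑ x_I h_I`,
`‖x‖² = sup_J (1/|J|) ∑_{I ⊆ J} x_I² |I|`, in terms of the Haar coefficients. -/
noncomputable def bmoSq (x : DI → ℝ) : ENNReal :=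
  ⨆ J : DI, (∑' I : {I : DI // I.carrier ⊆ J.carrier},
      ENNReal.ofReal ((x I.1) ^ 2) * I.1.len) / J.len

/-- `|L*|`: the Lebesgue measure of the set covered by the collection `L`. -/
noncomputable def covMeas (L : Set DI) : ENNReal := volume (⋃ I ∈ L, I.carrier)

/-- `y` is the coefficient function of `Tx` where `T h_I = h_{τ(I)}` and `x` has
coefficients `x_I`. -/
def HaarCompat (τ : DI → DI) (x y : DI → ℝ) : Prop :=
  (∀ I, y (τ I) = x I) ∧ ∀ J, J ∉ Set.range τ → y J = 0

/-- The maximal elements of a collection of dyadic intervals, under inclusion. -/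
def maxSet (S : Set DI) : Set DI :=
  {I | I ∈ S ∧ ∀ K ∈ S, I.carrier ⊆ K.carrier → I = K}


/-!
Stack `k_A` copies of every dyadic interval `A` on top of the copies of its ancestors, so that
`I` occupies the heights `[s_I, s_I + k_I)` with `s_I = ∑_{A ⊋ I} k_A` (`ancSum`), and put `I`
into the `i`-th collection when one of its heights is `≡ i (mod K)`. As `k_I ≤ K`, every `I` lands
in exactly `k_I` collections, which gives the identity. Nested intervals occupy disjoint ranges of
heights, so the intervals of one collection inside `J'` that contain a point `y` have distinct
heights `≡ i` in a range of length `f(y) = ∑_{y ∈ A ⊆ J'} k_A` (`dyadicWeight`): there are at most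
`1 + f(y)/K` of them. Integrating over `J'` and using `∫ f = ∑_{A ⊆ J'} k_A |A| ≤ K |J'|`, which is
the BMO bound, gives the Carleson constant `2`.
-/

open scoped ENNReal

theorem Nat.mul_card_le_of_subset_Ico_of_mod_eq {K a b i : ℕ} {s : Finset ℕ}
    (hs : s ⊆ Finset.Ico a b) (hi : ∀ j ∈ s, j % K = i) : K * s.card ≤ b - a + K := by
  have hinj : Set.InjOn (fun j => (j - a) / K) s := by
    intro j hj j' hj' hq
    have ha : a ≤ j ∧ a ≤ j' := ⟨(Finset.mem_Ico.1 (hs hj)).1, (Finset.mem_Ico.1 (hs hj')).1⟩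
    have hmod : (j - a) % K = (j' - a) % K := by
      refine Nat.ModEq.add_left_cancel' a ?_
      rw [Nat.add_sub_cancel' ha.1, Nat.add_sub_cancel' ha.2]
      exact (hi j hj).trans (hi j' hj').symm
    have h := Nat.div_add_mod (j - a) K
    have h' := Nat.div_add_mod (j' - a) K
    rw [show (j - a) / K = (j' - a) / K from hq, hmod] at h
    omega
  have hmaps : Set.MapsTo (fun j => (j - a) / K) s (Finset.range ((b - a) / K + 1)) := by
    intro j hj
    have := Finset.mem_Ico.1 (hs hj)
    simp only [Finset.coe_range, Set.mem_Iio]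
    exact Nat.lt_succ_of_le (Nat.div_le_div_right (by omega))
  calc K * s.card ≤ K * ((b - a) / K + 1) := by
        gcongr
        simpa using Finset.card_le_card_of_injOn _ hmaps hinj
    _ ≤ b - a + K := by rw [mul_add_one]; gcongr; exact Nat.mul_div_le _ _

open Classical in
theorem sum_tsum_subtype_eq_tsum_card_mul {ι α : Type*} [Fintype ι] (E : ι → Set α)
    (g : α → ℝ≥0∞) :
    ∑ i, ∑' a : E i, g a = ∑' a, ((Finset.univ.filter fun i => a ∈ E i).card : ℝ≥0∞) * g a := by
  simp_rw [tsum_subtype]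
  rw [← Summable.tsum_finsetSum fun _ _ => ENNReal.summable]
  refine tsum_congr fun a => ?_
  rw [Finset.card_filter, Nat.cast_sum, Finset.sum_mul]
  refine Finset.sum_congr rfl fun i _ => ?_
  by_cases h : a ∈ E i <;> simp [h]

namespace DI

theorem ext' {I J : DI} (hn : I.n = J.n) (hk : I.k = J.k) : I = J := by
  cases I; cases J; simp_all

instance : Countable DI :=
  Function.Injective.countable (f := fun I : DI => (I.n, I.k)) fun _ _ h =>
    ext' (Prod.ext_iff.1 h).1 (Prod.ext_iff.1 h).2

theorem mem_carrier_iff {I : DI} {y : ℝ} : y ∈ I.carrier ↔ 0 ≤ y ∧ ⌊y * 2 ^ I.n⌋₊ = I.k := by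
  have h2 : (0 : ℝ) < 2 ^ I.n := by positivity
  rw [carrier, Set.mem_Ico, div_le_iff₀ h2, lt_div_iff₀ h2]
  constructor
  · rintro ⟨hlo, hhi⟩
    have hy : 0 ≤ y * 2 ^ I.n := le_trans (Nat.cast_nonneg _) hlo
    exact ⟨nonneg_of_mul_nonneg_left hy h2, (Nat.floor_eq_iff hy).2 ⟨hlo, hhi⟩⟩
  · rintro ⟨hy, hk⟩
    exact (Nat.floor_eq_iff (by positivity)).1 hk

theorem eq_of_mem_of_mem {I J : DI} {y : ℝ} (hn : I.n = J.n) (hI : y ∈ I.carrier)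
    (hJ : y ∈ J.carrier) : I = J := by
  rw [mem_carrier_iff] at hI hJ
  exact ext' hn (by rw [← hI.2, ← hJ.2, hn])

theorem carrier_nonempty (I : DI) : I.carrier.Nonempty :=
  ⟨I.k / 2 ^ I.n, le_rfl, by gcongr; linarith⟩

theorem measurableSet_carrier (I : DI) : MeasurableSet I.carrier := measurableSet_Ico

theorem volume_carrier (I : DI) : volume I.carrier = I.len := by
  rw [carrier, Real.volume_Ico, len, ← sub_div, add_sub_cancel_left, one_div, inv_pow]

theorem len_ne_zero (I : DI) : I.len ≠ 0 := by
  rw [len]; exact (ENNReal.ofReal_pos.mpr (by positivity)).ne'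

theorem len_ne_top (I : DI) : I.len ≠ ⊤ := ENNReal.ofReal_ne_top

theorem n_le_of_subset {I J : DI} (h : I.carrier ⊆ J.carrier) : J.n ≤ I.n := by
  have hv : I.len ≤ J.len := by
    rw [← volume_carrier, ← volume_carrier]; exact measure_mono h
  rw [len, len, ENNReal.ofReal_le_ofReal_iff (by positivity), inv_pow, inv_pow,
    inv_le_inv₀ (by positivity) (by positivity)] at hv
  exact (pow_le_pow_iff_right₀ (by norm_num)).mp hv

/-- The dyadic interval of level `m` containing `I`, provided `m ≤ I.n`. -/
def anc (I : DI) (m : ℕ) : DI where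
  n := m
  k := I.k / 2 ^ (I.n - m)
  hk := by
    rw [Nat.div_lt_iff_lt_mul (by positivity), ← pow_add]
    exact I.hk.trans_le (Nat.pow_le_pow_right two_pos (by omega))

@[simp] theorem anc_n (I : DI) (m : ℕ) : (I.anc m).n = m := rfl

theorem anc_self (I : DI) : I.anc I.n = I :=
  ext' rfl (by simp [anc])

theorem subset_anc (I : DI) {m : ℕ} (hm : m ≤ I.n) : I.carrier ⊆ (I.anc m).carrier := by
  intro y hy
  rw [mem_carrier_iff] at hy ⊢
  refine ⟨hy.1, ?_⟩
  have hpow : y * 2 ^ m = y * 2 ^ I.n / ((2 ^ (I.n - m) : ℕ) : ℝ) := by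
    rw [Nat.cast_pow, Nat.cast_ofNat, eq_div_iff (by positivity), mul_assoc, ← pow_add,
      Nat.add_sub_cancel' hm]
  rw [anc_n, hpow, Nat.floor_div_natCast, hy.2]
  rfl

theorem subset_of_le_of_mem {I J : DI} {y : ℝ} (hn : J.n ≤ I.n) (hI : y ∈ I.carrier)
    (hJ : y ∈ J.carrier) : I.carrier ⊆ J.carrier := by
  rw [← eq_of_mem_of_mem (anc_n I J.n) (I.subset_anc hn hI) hJ]
  exact I.subset_anc hn

theorem subset_or_subset_of_mem {I J : DI} {y : ℝ} (hI : y ∈ I.carrier)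
    (hJ : y ∈ J.carrier) : I.carrier ⊆ J.carrier ∨ J.carrier ⊆ I.carrier :=
  (le_total J.n I.n).imp (subset_of_le_of_mem · hI hJ) (subset_of_le_of_mem · hJ hI)

theorem eq_anc_of_subset {I A : DI} (h : I.carrier ⊆ A.carrier) : A = I.anc A.n := by
  obtain ⟨y, hy⟩ := I.carrier_nonempty
  exact eq_of_mem_of_mem rfl (h hy) (I.subset_anc (n_le_of_subset h) hy)

theorem anc_eq_anc_of_subset {I A : DI} (h : I.carrier ⊆ A.carrier) {m : ℕ} (hm : m ≤ A.n) :
    I.anc m = A.anc m := by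
  obtain ⟨y, hy⟩ := I.carrier_nonempty
  exact eq_of_mem_of_mem rfl (I.subset_anc (hm.trans (n_le_of_subset h)) hy)
    (A.subset_anc hm (h hy))

theorem n_lt_of_subset_of_ne {I A : DI} (h : I.carrier ⊆ A.carrier) (hne : I ≠ A) :
    A.n < I.n := by
  refine (n_le_of_subset h).lt_of_ne fun hn => hne ?_
  obtain ⟨y, hy⟩ := I.carrier_nonempty
  exact eq_of_mem_of_mem hn.symm hy (h hy)

end DI

section Stacking

variable (k : DI → ℕ)

def ancSum (I : DI) : ℕ := ∑ m ∈ Finset.range I.n, k (I.anc m)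

def heights (I : DI) : Finset ℕ := Finset.Ico (ancSum k I) (ancSum k I + k I)

variable {k}

theorem ancSum_eq_add_sum_Ico {I A : DI} (h : I.carrier ⊆ A.carrier) :
    ancSum k I = ancSum k A + ∑ m ∈ Finset.Ico A.n I.n, k (I.anc m) := by
  rw [ancSum, ancSum, Finset.range_eq_Ico, Finset.range_eq_Ico,
    ← Finset.sum_Ico_consecutive _ (Nat.zero_le A.n) (DI.n_le_of_subset h)]
  congr 1
  refine Finset.sum_congr rfl fun m hm => ?_
  rw [DI.anc_eq_anc_of_subset h (Finset.mem_Ico.1 hm).2.le]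

theorem ancSum_add_eq_add_sum_Icc {I A : DI} (h : I.carrier ⊆ A.carrier) :
    ancSum k I + k I = ancSum k A + ∑ m ∈ Finset.Icc A.n I.n, k (I.anc m) := by
  rw [ancSum_eq_add_sum_Ico h, ← Finset.Ico_add_one_right_eq_Icc,
    Finset.sum_Ico_succ_top (DI.n_le_of_subset h), DI.anc_self, add_assoc]

theorem ancSum_add_le_of_subset_of_ne {I A : DI} (h : I.carrier ⊆ A.carrier) (hne : I ≠ A) :
    ancSum k A + k A ≤ ancSum k I := by
  have hA : A.n ∈ Finset.Ico A.n I.n := by simp [DI.n_lt_of_subset_of_ne h hne]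
  rw [ancSum_eq_add_sum_Ico h]
  gcongr
  rw [DI.eq_anc_of_subset h]
  exact Finset.single_le_sum (f := fun m => k (I.anc m)) (fun _ _ => Nat.zero_le _) hA

theorem disjoint_heights {I A : DI} (h : I.carrier ⊆ A.carrier ∨ A.carrier ⊆ I.carrier)
    (hne : I ≠ A) : Disjoint (heights k I) (heights k A) := by
  simp only [heights, Finset.disjoint_left, Finset.mem_Ico]
  rcases h with h | h
  · have := ancSum_add_le_of_subset_of_ne (k := k) h hne
    omega
  · have := ancSum_add_le_of_subset_of_ne (k := k) h hne.symm
    omega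

theorem heights_subset_Ico {I₀ I J : DI} (h₀ : I₀.carrier ⊆ I.carrier)
    (hJ : I.carrier ⊆ J.carrier) :
    heights k I ⊆ Finset.Ico (ancSum k J) (ancSum k I₀ + k I₀) := by
  have hJI : ancSum k J ≤ ancSum k I := by rw [ancSum_eq_add_sum_Ico hJ]; omega
  have hII₀ : ancSum k I + k I ≤ ancSum k I₀ + k I₀ := by
    rcases eq_or_ne I₀ I with rfl | hne
    · rfl
    · have := ancSum_add_le_of_subset_of_ne (k := k) h₀ hne
      omega
  intro j hj
  simp only [heights, Finset.mem_Ico] at hj ⊢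
  omega

end Stacking

def heightClass (k : DI → ℕ) (K i : ℕ) : Set DI := {I | ∃ j ∈ heights k I, j % K = i}

open Classical in
theorem card_filter_mem_heightClass {k : DI → ℕ} {K : ℕ} (hK : 0 < K) {I : DI}
    (hkK : k I ≤ K) : (Finset.univ.filter fun i : Fin K => I ∈ heightClass k K i).card = k I := by
  have himage : Finset.univ.filter (fun i : Fin K => I ∈ heightClass k K i) =
      (heights k I).image fun j => (⟨j % K, Nat.mod_lt j hK⟩ : Fin K) := by
    ext i
    rw [Finset.mem_filter]
    simp [heightClass, Fin.ext_iff]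
  rw [himage, Finset.card_image_of_injOn, heights, Nat.card_Ico, Nat.add_sub_cancel_left]
  intro a ha b hb hab
  simp only [heights, Finset.coe_Ico, Set.mem_Ico] at ha hb
  refine Nat.ModEq.eq_of_abs_lt (congrArg Fin.val hab) ?_
  rw [abs_sub_lt_iff]
  omega

theorem CarlesonLE.mono {L L' : Set DI} {M M' : ℝ≥0∞} (h : CarlesonLE L M) (hL : L' ⊆ L)
    (hM : M ≤ M') : CarlesonLE L' M' := fun J =>
  calc carlesonSum L' J ≤ carlesonSum L J :=
        ENNReal.tsum_mono_subtype DI.len (s := {I | I ∈ L' ∧ I.carrier ⊆ J.carrier})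
          (t := {I | I ∈ L ∧ I.carrier ⊆ J.carrier}) fun _ hI => ⟨hL hI.1, hI.2⟩
    _ ≤ M * J.len := h J
    _ ≤ M' * J.len := by gcongr

def WeightedCarlesonLE (k : DI → ℕ) (M : ℝ≥0∞) : Prop :=
  ∀ J : DI, ∑' A : {A : DI // A.carrier ⊆ J.carrier}, (k A.1 : ℝ≥0∞) * A.1.len ≤ M * J.len

noncomputable def dyadicWeight (k : DI → ℕ) (J : DI) (y : ℝ) : ℝ≥0∞ :=
  ∑' A : {A : DI // A.carrier ⊆ J.carrier}, A.1.carrier.indicator (fun _ => (k A.1 : ℝ≥0∞)) y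

section Carleson

variable {k : DI → ℕ} {K : ℕ}

theorem lintegral_dyadicWeight (k : DI → ℕ) (J : DI) :
    ∫⁻ y, dyadicWeight k J y =
      ∑' A : {A : DI // A.carrier ⊆ J.carrier}, (k A.1 : ℝ≥0∞) * A.1.len := by
  unfold dyadicWeight
  rw [lintegral_tsum fun A => (measurable_const.indicator A.1.measurableSet_carrier).aemeasurable]
  refine tsum_congr fun A => ?_
  rw [lintegral_indicator_const A.1.measurableSet_carrier, DI.volume_carrier]

theorem sum_Icc_anc_le_dyadicWeight {I J : DI} (h : I.carrier ⊆ J.carrier) {y : ℝ}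
    (hy : y ∈ I.carrier) :
    ((∑ m ∈ Finset.Icc J.n I.n, k (I.anc m) : ℕ) : ℝ≥0∞) ≤ dyadicWeight k J y := by
  have hmem : ∀ m ∈ Finset.Icc J.n I.n, y ∈ (I.anc m).carrier := fun m hm =>
    I.subset_anc (Finset.mem_Icc.1 hm).2 hy
  have hsub : ∀ m ∈ Finset.Icc J.n I.n, (I.anc m).carrier ⊆ J.carrier := fun m hm =>
    DI.subset_of_le_of_mem (by simpa using (Finset.mem_Icc.1 hm).1) (hmem m hm) (h hy)
  let A : Finset.Icc J.n I.n → {A : DI // A.carrier ⊆ J.carrier} := fun m => ⟨I.anc m, hsub m m.2⟩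
  have hA : Function.Injective A := fun m m' hmm' =>
    Subtype.ext (by simpa [A] using congrArg (fun B => B.1.n) hmm')
  calc ((∑ m ∈ Finset.Icc J.n I.n, k (I.anc m) : ℕ) : ℝ≥0∞)
      = ∑' m : Finset.Icc J.n I.n, (A m).1.carrier.indicator (fun _ => (k (A m).1 : ℝ≥0∞)) y := by
        rw [Finset.tsum_subtype (Finset.Icc J.n I.n)
          fun m => (I.anc m).carrier.indicator (fun _ => (k (I.anc m) : ℝ≥0∞)) y, Nat.cast_sum]
        exact Finset.sum_congr rfl fun m hm =>
          (Set.indicator_of_mem (hmem m hm) (fun _ => (k (I.anc m) : ℝ≥0∞))).symm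
    _ ≤ dyadicWeight k J y := ENNReal.tsum_comp_le_tsum_of_injective hA _

theorem mul_card_le_add_dyadicWeight {i : ℕ} {J : DI} {y : ℝ} (t : Finset DI)
    (ht : ∀ I ∈ t, I ∈ heightClass k K i ∧ I.carrier ⊆ J.carrier ∧ y ∈ I.carrier) :
    (K : ℝ≥0∞) * t.card ≤ K + dyadicWeight k J y := by
  rcases t.eq_empty_or_nonempty with rfl | hne
  · simp
  obtain ⟨I₀, hI₀, hmax⟩ := t.exists_max_image DI.n hne
  have hsub : ∀ I ∈ t, I₀.carrier ⊆ I.carrier := fun I hI =>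
    DI.subset_of_le_of_mem (hmax I hI) (ht I₀ hI₀).2.2 (ht I hI).2.2
  choose! j hj hji using fun I hI => (ht I hI).1
  have hinj : Set.InjOn j t := fun I hI I' hI' hjj => by_contra fun hne =>
    Finset.disjoint_left.1
      (disjoint_heights (DI.subset_or_subset_of_mem (ht I hI).2.2 (ht I' hI').2.2) hne)
      (hj I hI) (hjj ▸ hj I' hI')
  have hcount := Nat.mul_card_le_of_subset_Ico_of_mod_eq (K := K) (i := i) (s := t.image j)
    (a := ancSum k J) (b := ancSum k I₀ + k I₀)
    (fun _ h => by
      obtain ⟨I, hI, rfl⟩ := Finset.mem_image.1 h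
      exact heights_subset_Ico (hsub I hI) (ht I hI).2.1 (hj I hI))
    (fun _ h => by
      obtain ⟨I, hI, rfl⟩ := Finset.mem_image.1 h
      exact hji I hI)
  rw [Finset.card_image_of_injOn hinj, ancSum_add_eq_add_sum_Icc (ht I₀ hI₀).2.1,
    Nat.add_sub_cancel_left] at hcount
  calc (K : ℝ≥0∞) * t.card ≤ ((∑ m ∈ Finset.Icc J.n I₀.n, k (I₀.anc m) : ℕ) : ℝ≥0∞) + K := by
        exact_mod_cast hcount
    _ ≤ dyadicWeight k J y + K := by
        gcongr
        exact sum_Icc_anc_le_dyadicWeight (ht I₀ hI₀).2.1 (ht I₀ hI₀).2.2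
    _ = K + dyadicWeight k J y := add_comm _ _

theorem mul_tsum_indicator_heightClass_le {i : ℕ} (J : DI) (y : ℝ) :
    (K : ℝ≥0∞) * ∑' I : {I : DI // I ∈ heightClass k K i ∧ I.carrier ⊆ J.carrier},
        I.1.carrier.indicator 1 y
      ≤ J.carrier.indicator (fun _ => (K : ℝ≥0∞)) y + dyadicWeight k J y := by
  classical
  by_cases hy : y ∈ J.carrier
  swap
  · have hzero : ∀ I : {I : DI // I ∈ heightClass k K i ∧ I.carrier ⊆ J.carrier},
        I.1.carrier.indicator (1 : ℝ → ℝ≥0∞) y = 0 := fun I =>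
      Set.indicator_of_notMem (fun h => hy (I.2.2 h)) _
    simp [hzero]
  rw [Set.indicator_of_mem hy, ENNReal.tsum_eq_iSup_sum, ENNReal.mul_iSup]
  refine iSup_le fun s => ?_
  set t := (s.map (Function.Embedding.subtype _)).filter (y ∈ ·.carrier)
  calc (K : ℝ≥0∞) * ∑ I ∈ s, I.1.carrier.indicator 1 y = K * t.card := by
        rw [Finset.card_filter, Finset.sum_map, Nat.cast_sum]
        congr 1
        refine Finset.sum_congr rfl fun I _ => ?_
        by_cases h : y ∈ I.1.carrier <;> simp [h]
    _ ≤ K + dyadicWeight k J y := mul_card_le_add_dyadicWeight t fun I hI => by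
        obtain ⟨hIs, hyI⟩ := Finset.mem_filter.1 hI
        obtain ⟨I', -, rfl⟩ := Finset.mem_map.1 hIs
        exact ⟨I'.2.1, I'.2.2, hyI⟩

theorem carlesonLE_heightClass (hK : 0 < K)
    (hpack : WeightedCarlesonLE k K)
    (i : ℕ) : CarlesonLE (heightClass k K i) 2 := by
  intro J
  have hsum : carlesonSum (heightClass k K i) J = ∫⁻ y,
      ∑' I : {I : DI // I ∈ heightClass k K i ∧ I.carrier ⊆ J.carrier},
        I.1.carrier.indicator 1 y := by
    rw [lintegral_tsum fun I => (measurable_one.indicator I.1.measurableSet_carrier).aemeasurable]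
    exact tsum_congr fun I => by
      rw [lintegral_indicator_one I.1.measurableSet_carrier, DI.volume_carrier]
  refine (ENNReal.mul_le_mul_iff_right (by exact_mod_cast hK.ne')
    (ENNReal.natCast_ne_top K)).1 ?_
  calc (K : ℝ≥0∞) * carlesonSum (heightClass k K i) J
      = ∫⁻ y, K * ∑' I : {I : DI // I ∈ heightClass k K i ∧ I.carrier ⊆ J.carrier},
          I.1.carrier.indicator 1 y := by
        rw [hsum, lintegral_const_mul' _ _ (ENNReal.natCast_ne_top K)]
    _ ≤ ∫⁻ y, J.carrier.indicator (fun _ => (K : ℝ≥0∞)) y + dyadicWeight k J y :=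
        lintegral_mono fun y => mul_tsum_indicator_heightClass_le J y
    _ = K * J.len + ∑' A : {A : DI // A.carrier ⊆ J.carrier}, (k A.1 : ℝ≥0∞) * A.1.len := by
        rw [lintegral_add_left (measurable_const.indicator J.measurableSet_carrier),
          lintegral_indicator_const J.measurableSet_carrier, DI.volume_carrier,
          lintegral_dyadicWeight]
    _ ≤ K * J.len + K * J.len := by gcongr; exact hpack J
    _ = K * (2 * J.len) := by ring

end Carleson

theorem tsum_ofReal_sq_mul_len_le {x : DI → ℝ} (hx : bmoSq x ≤ 1) (J : DI) :
    ∑' A : {A : DI // A.carrier ⊆ J.carrier}, ENNReal.ofReal (x A.1 ^ 2) * A.1.len ≤ J.len := by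
  have h := (le_iSup (fun J : DI => (∑' A : {A : DI // A.carrier ⊆ J.carrier},
    ENNReal.ofReal (x A.1 ^ 2) * A.1.len) / J.len) J).trans hx
  rwa [ENNReal.div_le_iff J.len_ne_zero J.len_ne_top, one_mul] at h

theorem weightedCarlesonLE_of_bmoSq_le_one {x : DI → ℝ} (hx : bmoSq x ≤ 1) {K : ℕ}
    (hK : 0 < K) {k : DI → ℕ} (hk : ∀ I, x I ^ 2 = (k I : ℝ) / K) : WeightedCarlesonLE k K := by
  intro J
  have hK0 : (K : ℝ≥0∞) ≠ 0 := by exact_mod_cast hK.ne'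
  have hcoef : ∀ A, (k A : ℝ≥0∞) = K * ENNReal.ofReal (x A ^ 2) := fun A => by
    rw [hk A, ENNReal.ofReal_div_of_pos (by exact_mod_cast hK), ENNReal.ofReal_natCast,
      ENNReal.ofReal_natCast, ENNReal.mul_div_cancel hK0 (ENNReal.natCast_ne_top K)]
  simp_rw [hcoef, mul_assoc, ENNReal.tsum_mul_left]
  gcongr
  exact tsum_ofReal_sq_mul_len_le hx J

theorem WeightedCarlesonLE.le {k : DI → ℕ} {K : ℕ} (hpack : WeightedCarlesonLE k K) (I : DI) :
    k I ≤ K := by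
  have h : (k I : ℝ≥0∞) * I.len ≤ K * I.len :=
    (ENNReal.le_tsum (⟨I, subset_rfl⟩ : {A : DI // A.carrier ⊆ I.carrier})).trans (hpack I)
  exact_mod_cast (ENNReal.mul_le_mul_iff_left I.len_ne_zero I.len_ne_top).1 h

theorem stmt10_general (x : DI → ℝ) (hx : bmoSq x ≤ 1)
    (K : ℕ) (hK : 0 < K) (k : DI → ℕ) (hk : ∀ I, (x I) ^ 2 = (k I : ℝ) / K)
    (J : DI) (τ : DI → DI) :
    ∃ E : Fin K → Set DI,
      (∀ i, CarlesonLE (E i) 3) ∧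
      (∀ i, ∀ I ∈ E i, (τ I).carrier ⊆ J.carrier) ∧
      (1 / (K : ENNReal)) *
          ∑' I : {I : DI // (τ I).carrier ⊆ J.carrier}, (k I.1 : ENNReal) * (τ I.1).len
        = (1 / (K : ENNReal)) * ∑ i : Fin K, ∑' I : E i, (τ I.1).len := by
  classical
  have hpack := weightedCarlesonLE_of_bmoSq_le_one hx hK hk
  refine ⟨fun i => {I | (τ I).carrier ⊆ J.carrier} ∩ heightClass k K i,
    fun i => (carlesonLE_heightClass hK hpack i).mono Set.inter_subset_right (by norm_num),
    fun i I hI => hI.1, ?_⟩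
  rw [sum_tsum_subtype_eq_tsum_card_mul (fun i : Fin K => _) fun I => (τ I).len]
  congr 1
  refine (tsum_subtype {I | (τ I).carrier ⊆ J.carrier} fun I => (k I : ℝ≥0∞) * (τ I).len).trans
    (tsum_congr fun I => ?_)
  by_cases hI : (τ I).carrier ⊆ J.carrier
  · simp [hI, card_filter_mem_heightClass hK (hpack.le I)]
  · simp [hI]

/-- Splitting of bounded BMO functions with rational-square coefficients into `K`
collections each satisfying the `3`-Carleson condition. -/
theorem stmt10 (x : DI → ℝ) (hx : bmoSq x ≤ 1)
    (K : ℕ) (hK : 0 < K) (k : DI → ℕ) (hk : ∀ I, (x I) ^ 2 = (k I : ℝ) / K)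
    (J : DI) (τ : DI → DI) (hτ : Function.Injective τ) :
    ∃ E : Fin K → Set DI,
      (∀ i, CarlesonLE (E i) 3) ∧
      (∀ i, ∀ I ∈ E i, (τ I).carrier ⊆ J.carrier) ∧
      (1 / (K : ENNReal)) *
          ∑' I : {I : DI // (τ I).carrier ⊆ J.carrier}, (k I.1 : ENNReal) * (τ I.1).len
        = (1 / (K : ENNReal)) * ∑ i : Fin K, ∑' I : E i, (τ I.1).len :=
  stmt10_general x hx K hK k hk J τ
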